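/- In the Euclidean plane, let P_1, P_2, P_3 be the projections onto C_1 = ℝ×{α}, C_2 = ℝ×{β}, and C_3 = {(ξ_1,ξ_2) : ξ_1 > 0, ξ_2 > 0, ξ_1 ξ_2 ≥ γ} with γ > 0. Then for ε ∈ (0,1), the fixed point set of R^ε = (Id+ε(P_3−Id))∘(Id+ε(P_2−Id))∘(Id+ε(P_1−Id)) equals {(ξ_1,ξ_2) ∈ C_3 : ξ_2 = ((1−ε)α + β)/(2−ε)}. -/

import Mathlib

/-! The relaxed projections onto the horizontal lines keep the first coordinate and act on the
second one by an affine contraction. So if `p` is fixed, the last relaxed projection does not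
move the first coordinate of `q = T₂ T₁ p`, i.e. `P₃ q - q` is vertical. Since `C₃` is convex,
`q - P₃ q` lies in the normal cone of `C₃` at `P₃ q`, and that cone contains no nonzero vertical
vector; hence `q ∈ C₃` and `q = p`. The remaining condition `q₂ = p₂` is linear in `p₂`, with
the unique solution `((1 - ε) α + β) / (2 - ε)`. -/

open Set

section NearestPoint

variable {E : Type*}

def IsNearestPointMap [NormedAddCommGroup E] (K : Set E) (P : E → E) : Prop :=
  ∀ x, P x ∈ K ∧ ∀ y ∈ K, ‖x - P x‖ ≤ ‖x - y‖

def relax [AddCommGroup E] [Module ℝ E] (ε : ℝ) (P : E → E) (x : E) : E :=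
  x + ε • (P x - x)

variable [NormedAddCommGroup E] {K : Set E} {P : E → E}

theorem IsNearestPointMap.apply_eq_self (hP : IsNearestPointMap K P) {x : E} (hx : x ∈ K) :
    P x = x := by
  have h := (hP x).2 x hx
  rw [sub_self, norm_zero, norm_le_zero_iff, sub_eq_zero] at h
  exact h.symm

theorem IsNearestPointMap.inner_sub_le_zero [InnerProductSpace ℝ E] (hP : IsNearestPointMap K P)
    (hK : Convex ℝ K) (x : E) {w : E} (hw : w ∈ K) : inner ℝ (x - P x) (w - P x) ≤ 0 := by
  have : Nonempty K := ⟨⟨P x, (hP x).1⟩⟩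
  refine (norm_eq_iInf_iff_real_inner_le_zero hK (hP x).1).1 (le_antisymm ?_ ?_) w hw
  · exact le_ciInf fun w => (hP x).2 w w.2
  · exact ciInf_le (f := fun w : K => ‖x - w‖)
      ⟨0, forall_mem_range.2 fun w => norm_nonneg (x - w)⟩ ⟨P x, (hP x).1⟩

end NearestPoint

section Plane

local notation "ℝ²" => EuclideanSpace ℝ (Fin 2)

theorem euclideanSpace_fin_two_ext_iff {x y : ℝ²} : x = y ↔ x 0 = y 0 ∧ x 1 = y 1 := by
  refine ⟨fun h => h ▸ ⟨rfl, rfl⟩, fun ⟨h₀, h₁⟩ => ?_⟩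
  ext i
  fin_cases i <;> assumption

theorem norm_sq_fin_two (v : ℝ²) : ‖v‖ ^ 2 = v 0 ^ 2 + v 1 ^ 2 := by
  simp [EuclideanSpace.norm_sq_eq, Fin.sum_univ_two]

theorem inner_fin_two (v w : ℝ²) : inner ℝ v w = v 0 * w 0 + v 1 * w 1 := by
  simp [PiLp.inner_apply, Fin.sum_univ_two, mul_comm]

theorem relax_apply (ε : ℝ) (P : ℝ² → ℝ²) (x : ℝ²) (i : Fin 2) :
    relax ε P x i = x i + ε * (P x i - x i) := rfl

theorem IsNearestPointMap.apply_zero_of_horizontal {c : ℝ} {P : ℝ² → ℝ²}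
    (hP : IsNearestPointMap {p | p 1 = c} P) (x : ℝ²) : P x 0 = x 0 := by
  have h := pow_le_pow_left₀ (norm_nonneg _) ((hP x).2 !₂[x 0, c] rfl) 2
  have hPx : P x 1 = c := (hP x).1
  simp only [norm_sq_fin_two, PiLp.sub_apply, hPx, Matrix.cons_val_zero, Matrix.cons_val_one,
    sub_self] at h
  have hsq : (x 0 - P x 0) ^ 2 = 0 := by nlinarith
  linarith [pow_eq_zero_iff two_ne_zero |>.1 hsq]

theorem relax_apply_zero_of_horizontal {c ε : ℝ} {P : ℝ² → ℝ²}
    (hP : IsNearestPointMap {p | p 1 = c} P) (x : ℝ²) : relax ε P x 0 = x 0 := by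
  rw [relax_apply, hP.apply_zero_of_horizontal, sub_self, mul_zero, add_zero]

theorem relax_apply_one_of_horizontal {c ε : ℝ} {P : ℝ² → ℝ²}
    (hP : IsNearestPointMap {p | p 1 = c} P) (x : ℝ²) :
    relax ε P x 1 = (1 - ε) * x 1 + ε * c := by
  rw [relax_apply, show P x 1 = c from (hP x).1]
  ring

def hyperbolicRegion (γ : ℝ) : Set ℝ² :=
  {p | 0 < p 0 ∧ 0 < p 1 ∧ γ ≤ p 0 * p 1}

theorem convex_hyperbolicRegion {γ : ℝ} (hγ : 0 < γ) : Convex ℝ (hyperbolicRegion γ) := by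
  let coords : ℝ² →ₗ[ℝ] ℝ × ℝ :=
    (EuclideanSpace.proj 0).toLinearMap.prod (EuclideanSpace.proj 1).toLinearMap
  have hepi : hyperbolicRegion γ = coords ⁻¹' {z | z.1 ∈ Ioi 0 ∧ γ • z.1 ^ (-1 : ℤ) ≤ z.2} := by
    ext p
    change _ ∧ _ ∧ _ ↔ 0 < p 0 ∧ γ • p 0 ^ (-1 : ℤ) ≤ p 1
    rw [and_congr_right_iff]
    intro hp₀
    rw [smul_eq_mul, zpow_neg_one, ← div_eq_mul_inv, div_le_iff₀ hp₀, mul_comm (p 1)]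
    exact ⟨And.right, fun h => ⟨pos_of_mul_pos_right (hγ.trans_le h) hp₀.le, h⟩⟩
  rw [hepi]
  exact ((convexOn_zpow (-1)).smul hγ.le).convex_epigraph.linear_preimage coords

theorem IsNearestPointMap.eq_self_of_apply_zero_eq {γ : ℝ} (hγ : 0 < γ) {P : ℝ² → ℝ²}
    (hP : IsNearestPointMap (hyperbolicRegion γ) P) {q : ℝ²} (h₀ : P q 0 = q 0) : P q = q := by
  obtain ⟨hu₀, hu₁, hγu⟩ := (hP q).1
  have hinner := fun w hw => hP.inner_sub_le_zero (convex_hyperbolicRegion hγ) q (w := w) hw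
  have above := hinner !₂[P q 0, P q 1 + 1]
    (⟨hu₀, by linarith, by nlinarith⟩ : 0 < P q 0 ∧ 0 < P q 1 + 1 ∧ γ ≤ P q 0 * (P q 1 + 1))
  have below := hinner !₂[2 * P q 0, P q 1 / 2]
    (⟨by linarith, by linarith, by linarith⟩ : 0 < 2 * P q 0 ∧ 0 < P q 1 / 2 ∧
      γ ≤ 2 * P q 0 * (P q 1 / 2))
  simp only [inner_fin_two, PiLp.sub_apply, h₀, Matrix.cons_val_zero, Matrix.cons_val_one,
    sub_self, zero_mul, zero_add] at above below
  exact euclideanSpace_fin_two_ext_iff.2 ⟨h₀, by nlinarith⟩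

theorem relax_eq_iff_of_hyperbolicRegion {γ ε : ℝ} (hγ : 0 < γ) (hε : ε ≠ 0) {P : ℝ² → ℝ²}
    (hP : IsNearestPointMap (hyperbolicRegion γ) P) {p q : ℝ²} (h₀ : q 0 = p 0) :
    relax ε P q = p ↔ q ∈ hyperbolicRegion γ ∧ q = p := by
  constructor
  · intro h
    have hP₀ : P q 0 = q 0 := by
      have h' := congrArg (· 0) h
      simp only [relax_apply, ← h₀, add_eq_left, mul_eq_zero, hε, false_or, sub_eq_zero] at h'
      exact h'
    have hPq := hP.eq_self_of_apply_zero_eq hγ hP₀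
    refine ⟨hPq ▸ (hP q).1, ?_⟩
    rwa [relax, hPq, sub_self, smul_zero, add_zero] at h
  · rintro ⟨hq, rfl⟩
    rw [relax, hP.apply_eq_self hq, sub_self, smul_zero, add_zero]

end Plane

theorem stmt11 (α β γ : ℝ) (hγ : 0 < γ)
    (C1 C2 C3 : Set (EuclideanSpace ℝ (Fin 2)))
    (hC1 : C1 = {p | p 1 = α}) (hC2 : C2 = {p | p 1 = β})
    (hC3 : C3 = {p | 0 < p 0 ∧ 0 < p 1 ∧ γ ≤ p 0 * p 1})
    (P1 P2 P3 : EuclideanSpace ℝ (Fin 2) → EuclideanSpace ℝ (Fin 2))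
    (hP1 : ∀ x, P1 x ∈ C1 ∧ ∀ y ∈ C1, ‖x - P1 x‖ ≤ ‖x - y‖)
    (hP2 : ∀ x, P2 x ∈ C2 ∧ ∀ y ∈ C2, ‖x - P2 x‖ ≤ ‖x - y‖)
    (hP3 : ∀ x, P3 x ∈ C3 ∧ ∀ y ∈ C3, ‖x - P3 x‖ ≤ ‖x - y‖) :
    ∀ ε ∈ Set.Ioo (0:ℝ) 1,
      {p | (fun q => q + ε • (P3 q - q))
            ((fun q => q + ε • (P2 q - q)) ((fun q => q + ε • (P1 q - q)) p)) = p}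
        = {p ∈ C3 | p 1 = ((1 - ε) * α + β) / (2 - ε)} := by
  rintro ε ⟨hε₀, hε₁⟩
  subst hC1 hC2 hC3
  ext p
  change relax ε P3 (relax ε P2 (relax ε P1 p)) = p ↔ p ∈ hyperbolicRegion γ ∧ _
  have hq₀ : relax ε P2 (relax ε P1 p) 0 = p 0 := by
    rw [relax_apply_zero_of_horizontal hP2, relax_apply_zero_of_horizontal hP1]
  have hqp : relax ε P2 (relax ε P1 p) = p ↔ p 1 = ((1 - ε) * α + β) / (2 - ε) := by
    rw [euclideanSpace_fin_two_ext_iff, relax_apply_one_of_horizontal hP2,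
      relax_apply_one_of_horizontal hP1, eq_div_iff (by linarith)]
    refine ⟨fun h => mul_left_cancel₀ hε₀.ne' ?_, fun h => ⟨hq₀, ?_⟩⟩
    · linear_combination -h.2
    · linear_combination -ε * h
  rw [relax_eq_iff_of_hyperbolicRegion hγ hε₀.ne' hP3 hq₀, ← hqp]
  exact and_congr_left fun h => by rw [h]
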